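/- Let Ψ¹,…,Ψ^M be linearly independent vectors in a complex Hilbert space Z such that the matrix 𝓔 = (ε_{ij}) defined by ⟨Ψ^i,Ψ^j⟩ = δ_{ij} + ε_{ij} satisfies 2‖𝓔‖₁ + ε_max < 1, where ε_max := max_{1≤i≤M}|ε_{ii}|. Define Ψ̃¹ := Ψ¹ and, for 2 ≤ i ≤ M, Ψ̃^i := Ψ^i − Σ_{1≤j,k≤i−1} (A_{i−1}^{-1})_{jk} ⟨Ψ^k,Ψ^i⟩ Ψ^j, where A_{i−1} is the (i−1)×(i−1) Gram matrix with entries (A_{i−1})_{jk} = ⟨Ψ^j,Ψ^k⟩. Then for every 1 ≤ i ≤ M, ‖Ψ̃^i‖ ≥ (1 − 2‖𝓔‖₁ − ε_max)(1 − ‖𝓔‖₁)^{-1} > 0 and |1 − ‖Ψ̃^i‖^{-1}| ≤ (‖𝓔‖₁ + ε_max)(1 − 2‖𝓔‖₁ − ε_max)^{-1}. -/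

import Mathlib

open scoped InnerProductSpace

/-- Maximum absolute column sum norm of a matrix. -/
noncomputable def matNorm1 {M : ℕ} {𝕜 : Type*} [NormedField 𝕜]
    (A : Matrix (Fin M) (Fin M) 𝕜) : ℝ :=
  ⨆ j, ∑ i, ‖A i j‖

/-- The Gram matrix of the first `i` vectors of `Ψ`. -/
noncomputable def gram {Z : Type*} [NormedAddCommGroup Z] [InnerProductSpace ℂ Z]
    {M : ℕ} (Ψ : Fin M → Z) (i : Fin M) : Matrix (Fin i.val) (Fin i.val) ℂ :=
  fun j k => ⟪Ψ (Fin.castLE i.isLt.le j), Ψ (Fin.castLE i.isLt.le k)⟫_ℂ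

/-- The Gram–Schmidt step: `Ψ i` minus its orthogonal projection onto the span of the
previous vectors, written via the inverse Gram matrix. -/
noncomputable def tildePsi {Z : Type*} [NormedAddCommGroup Z] [InnerProductSpace ℂ Z]
    {M : ℕ} (Ψ : Fin M → Z) (i : Fin M) : Z :=
  Ψ i - ∑ j : Fin i.val, ∑ k : Fin i.val,
    ((gram Ψ i)⁻¹ j k * ⟪Ψ (Fin.castLE i.isLt.le k), Ψ i⟫_ℂ) • Ψ (Fin.castLE i.isLt.le j)


/-! Write `⟪Ψ j, Ψ k⟫ = δ_jk + ε_jk` and `E = ‖ε‖₁`. The coefficients `c = A⁻¹ b` of the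
projection `v` of `Ψ i` onto the span of its predecessors solve `(1 + ε') c = b`, where `ε'` is a
principal block of `ε` and `b_k = ε_{k i}`. Since `ε` is Hermitian, the row sums of `ε'` are
bounded by `E` as well, so looking at the largest entry of `c` gives `|c_k| ≤ E / (1 - E)`.
Hence `‖v‖² = Re ⟪v, Ψ i⟫ = Re ∑ conj c_k b_k ≤ E² / (1 - E)`, and Pythagoras,
`‖Ψ̃ i‖² = ‖Ψ i‖² - ‖v‖²`, traps `‖Ψ̃ i‖²` between `1 - εmax - E² / (1 - E)` and `1 + εmax`;
both bounds of the theorem follow from this by elementary algebra. -/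

open scoped Matrix
open Finset

section GramProjection

variable {𝕜 Z ι : Type*} [RCLike 𝕜] [NormedAddCommGroup Z] [InnerProductSpace 𝕜 Z] [Fintype ι]

lemma inner_sum_smul_eq_gram_mulVec (f : ι → Z) (c : ι → 𝕜) (l : ι) :
    ⟪f l, ∑ k, c k • f k⟫_𝕜 = (Matrix.gram 𝕜 f *ᵥ c) l := by
  simp only [inner_sum, inner_smul_right, Matrix.mulVec, dotProduct, Matrix.gram_apply, mul_comm]

variable {f : ι → Z} {x : Z} {c : ι → 𝕜}

lemma inner_sum_smul_self_of_gram_mulVec_eq (hc : Matrix.gram 𝕜 f *ᵥ c = fun k => ⟪f k, x⟫_𝕜) :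
    ⟪∑ k, c k • f k, ∑ k, c k • f k⟫_𝕜 = ⟪∑ k, c k • f k, x⟫_𝕜 := by
  simp only [sum_inner, inner_smul_left, inner_sum_smul_eq_gram_mulVec, hc]

lemma norm_sub_sum_smul_sq_of_gram_mulVec_eq
    (hc : Matrix.gram 𝕜 f *ᵥ c = fun k => ⟪f k, x⟫_𝕜) :
    ‖x - ∑ k, c k • f k‖ ^ 2 = ‖x‖ ^ 2 - ‖∑ k, c k • f k‖ ^ 2 := by
  set v := ∑ k, c k • f k
  have horth : ⟪v, x - v⟫_𝕜 = 0 := by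
    rw [inner_sub_right, inner_sum_smul_self_of_gram_mulVec_eq hc, sub_self]
  have := norm_add_sq_eq_norm_sq_add_norm_sq_of_inner_eq_zero v (x - v) horth
  rw [add_sub_cancel] at this
  rw [sq, sq, sq, this]
  ring

lemma norm_sum_smul_sq_le_of_gram_mulVec_eq
    (hc : Matrix.gram 𝕜 f *ᵥ c = fun k => ⟪f k, x⟫_𝕜) :
    ‖∑ k, c k • f k‖ ^ 2 ≤ ∑ k, ‖c k‖ * ‖⟪f k, x⟫_𝕜‖ := by
  calc ‖∑ k, c k • f k‖ ^ 2 = RCLike.re ⟪∑ k, c k • f k, x⟫_𝕜 := by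
        rw [← inner_sum_smul_self_of_gram_mulVec_eq hc, inner_self_eq_norm_sq]
    _ ≤ ‖⟪∑ k, c k • f k, x⟫_𝕜‖ := RCLike.re_le_norm _
    _ ≤ ∑ k, ‖c k‖ * ‖⟪f k, x⟫_𝕜‖ := by
        simp only [sum_inner, inner_smul_left]
        refine (norm_sum_le _ _).trans_eq (sum_congr rfl fun k _ => ?_)
        rw [norm_mul, RCLike.norm_conj]

open scoped ComplexOrder in
lemma Matrix.gram_mulVec_inv_mulVec [DecidableEq ι] (hf : LinearIndependent 𝕜 f) (b : ι → 𝕜) :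
    Matrix.gram 𝕜 f *ᵥ ((Matrix.gram 𝕜 f)⁻¹ *ᵥ b) = b := by
  rw [Matrix.mulVec_mulVec, Matrix.mul_nonsing_inv _ ((Matrix.isUnit_iff_isUnit_det _).mp
    (Matrix.posDef_gram_of_linearIndependent hf).isUnit), Matrix.one_mulVec]

end GramProjection

lemma Finset.sum_comp_le_sum_of_injective {ι κ : Type*} [Fintype ι] [Fintype κ] {e : κ → ι}
    (he : Function.Injective e) {g : ι → ℝ} (hg : ∀ x, 0 ≤ g x) :
    ∑ k, g (e k) ≤ ∑ x, g x := by
  simpa only [sum_map, Function.Embedding.coeFn_mk] using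
    sum_le_univ_sum_of_nonneg (s := univ.map ⟨e, he⟩) hg

lemma Matrix.norm_le_of_one_add_mulVec_eq {𝕜 ι : Type*} [NormedRing 𝕜] [Fintype ι]
    [DecidableEq ι] {K : Matrix ι ι 𝕜} {x b : ι → 𝕜} {r β : ℝ}
    (hK : ∀ j, ∑ k, ‖K j k‖ ≤ r) (hr : r < 1) (hb : ∀ j, ‖b j‖ ≤ β)
    (hx : (1 + K) *ᵥ x = b) (j : ι) : ‖x j‖ ≤ β / (1 - r) := by
  have : Nonempty ι := ⟨j⟩
  obtain ⟨j₀, hj₀⟩ := Finite.exists_max fun j => ‖x j‖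
  have hxj₀ : x j₀ = b j₀ - (K *ᵥ x) j₀ := by
    rw [← hx, Matrix.add_mulVec, Matrix.one_mulVec, Pi.add_apply, add_sub_cancel_right]
  have hKx : ‖(K *ᵥ x) j₀‖ ≤ r * ‖x j₀‖ :=
    calc ‖(K *ᵥ x) j₀‖ ≤ ∑ k, ‖K j₀ k‖ * ‖x k‖ :=
          (norm_sum_le _ _).trans (sum_le_sum fun k _ => norm_mul_le _ _)
      _ ≤ ∑ k, ‖K j₀ k‖ * ‖x j₀‖ := sum_le_sum fun k _ => by gcongr; exact hj₀ k
      _ ≤ r * ‖x j₀‖ := by rw [← sum_mul]; gcongr; exact hK j₀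
  have hmax : ‖x j₀‖ ≤ β + r * ‖x j₀‖ :=
    (congrArg norm hxj₀).trans_le ((norm_sub_le _ _).trans (add_le_add (hb j₀) hKx))
  rw [le_div_iff₀ (by linarith)]
  nlinarith [hj₀ j]

section MatNorm1

variable {𝕜 : Type*} [NormedField 𝕜] {M : ℕ} (A : Matrix (Fin M) (Fin M) 𝕜)

lemma sum_norm_le_matNorm1 (j : Fin M) : ∑ i, ‖A i j‖ ≤ matNorm1 A :=
  le_ciSup (f := fun j => ∑ i, ‖A i j‖) (Set.finite_range _).bddAbove j

lemma matNorm1_nonneg : 0 ≤ matNorm1 A :=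
  Real.iSup_nonneg fun _ => sum_nonneg fun _ _ => norm_nonneg _

end MatNorm1

lemma Matrix.IsHermitian.sum_norm_submatrix_le_matNorm1 {𝕜 ι : Type*} [RCLike 𝕜] [Fintype ι]
    {M : ℕ} {A : Matrix (Fin M) (Fin M) 𝕜} (hA : A.IsHermitian) {e : ι → Fin M}
    (he : Function.Injective e) (j : ι) :
    ∑ k, ‖A.submatrix e e j k‖ ≤ matNorm1 A := by
  calc ∑ k, ‖A.submatrix e e j k‖ = ∑ k, ‖A (e k) (e j)‖ := by
        simp only [Matrix.submatrix_apply, ← hA.apply (e j), norm_star]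
    _ ≤ ∑ i, ‖A i (e j)‖ :=
        sum_comp_le_sum_of_injective he (g := fun i => ‖A i (e j)‖) fun _ => norm_nonneg _
    _ ≤ matNorm1 A := sum_norm_le_matNorm1 A (e j)

section Arithmetic

variable {E m t : ℝ}

lemma mul_inv_le_of_le_sq (hE : 0 ≤ E) (hm : 0 ≤ m) (hsmall : 2 * E + m < 1) (ht : 0 ≤ t)
    (h : 1 - m - E / (1 - E) * E ≤ t ^ 2) : (1 - 2 * E - m) * (1 - E)⁻¹ ≤ t := by
  have hE1 : 0 < 1 - E := by linarith
  have hD : 0 < 1 - 2 * E - m := by linarith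
  rw [← div_eq_mul_inv, div_le_iff₀ hE1]
  refine le_of_sq_le_sq ?_ (mul_nonneg ht hE1.le)
  have : E / (1 - E) * E * (1 - E) = E ^ 2 := by field_simp
  nlinarith [mul_nonneg hE hD.le, mul_nonneg hm hD.le, mul_nonneg (mul_nonneg hE hE) hE,
    mul_nonneg (mul_nonneg hE hm) (by linarith : (0 : ℝ) ≤ 2 - E), sq_nonneg (1 - E)]

lemma abs_one_sub_inv_le_of_mul_inv_le (hE : 0 ≤ E) (hm : 0 ≤ m) (hsmall : 2 * E + m < 1)
    (hlow : (1 - 2 * E - m) * (1 - E)⁻¹ ≤ t) (hhigh : t ^ 2 ≤ 1 + m) :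
    |1 - t⁻¹| ≤ (E + m) * (1 - 2 * E - m)⁻¹ := by
  have hE1 : 0 < 1 - E := by linarith
  have hD : 0 < 1 - 2 * E - m := by linarith
  have hL : 0 < (1 - 2 * E - m) * (1 - E)⁻¹ := mul_pos hD (inv_pos.2 hE1)
  have ht : 0 < t := hL.trans_le hlow
  have hL_inv : ((1 - 2 * E - m) * (1 - E)⁻¹)⁻¹ = 1 + (E + m) * (1 - 2 * E - m)⁻¹ := by
    field_simp
    ring
  have ht_le : t ≤ 1 + m := by nlinarith
  have hm_le : m ≤ (E + m) * (1 - 2 * E - m)⁻¹ := by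
    rw [← div_eq_mul_inv, le_div_iff₀ hD]
    nlinarith
  have hinv_ge : 1 - m ≤ t⁻¹ := by
    refine le_trans ?_ (inv_anti₀ ht ht_le)
    rw [← one_div, le_div_iff₀ (by linarith)]
    nlinarith
  rw [abs_le]
  constructor
  · linarith [hL_inv ▸ inv_anti₀ hL hlow]
  · linarith

end Arithmetic

section GramSchmidtStep

variable {Z : Type*} [NormedAddCommGroup Z] [InnerProductSpace ℂ Z] {M : ℕ} {Ψ : Fin M → Z}
  (i : Fin M) {ε : Matrix (Fin M) (Fin M) ℂ}

lemma tildePsi_eq_sub_sum_smul :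
    tildePsi Ψ i = Ψ i - ∑ k, ((gram Ψ i)⁻¹ *ᵥ fun k => ⟪Ψ (Fin.castLE i.isLt.le k), Ψ i⟫_ℂ) k •
      (Ψ ∘ Fin.castLE i.isLt.le) k := by
  simp only [tildePsi, Matrix.mulVec, dotProduct, sum_smul, Function.comp_apply]

variable (hε : Matrix.gram ℂ Ψ = 1 + ε)
include hε

lemma inner_eq_one_apply_add (j k : Fin M) :
    ⟪Ψ j, Ψ k⟫_ℂ = (1 : Matrix (Fin M) (Fin M) ℂ) j k + ε j k := by
  rw [← Matrix.add_apply, ← hε]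
  rfl

lemma gram_eq_one_add_submatrix :
    gram Ψ i = 1 + ε.submatrix (Fin.castLE i.isLt.le) (Fin.castLE i.isLt.le) := by
  change (Matrix.gram ℂ Ψ).submatrix _ _ = _
  rw [hε]
  ext j k
  simp [Matrix.one_apply, (Fin.castLE_injective _).eq_iff]

lemma inner_castLE_eq (k : Fin i) :
    ⟪Ψ (Fin.castLE i.isLt.le k), Ψ i⟫_ℂ = ε (Fin.castLE i.isLt.le k) i := by
  rw [inner_eq_one_apply_add hε, Matrix.one_apply_ne (Fin.ne_of_lt k.isLt), zero_add]

lemma isHermitian_of_gram_eq_one_add : ε.IsHermitian := by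
  rw [eq_sub_of_add_eq' hε.symm]
  exact (Matrix.isHermitian_gram ℂ Ψ).sub Matrix.isHermitian_one

lemma norm_sq_eq_one_add_re : ‖Ψ i‖ ^ 2 = 1 + (ε i i).re := by
  rw [← inner_self_eq_norm_sq (𝕜 := ℂ), RCLike.re_to_complex, inner_eq_one_apply_add hε,
    Matrix.one_apply_eq, Complex.add_re, Complex.one_re]

open scoped ComplexOrder in
lemma norm_tildePsi_sq_mem (hΨ : LinearIndependent ℂ Ψ) {m : ℝ} (hdiag : ∀ k, ‖ε k k‖ ≤ m)
    (hE : matNorm1 ε < 1) :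
    1 - m - matNorm1 ε / (1 - matNorm1 ε) * matNorm1 ε ≤ ‖tildePsi Ψ i‖ ^ 2 ∧
      ‖tildePsi Ψ i‖ ^ 2 ≤ 1 + m := by
  set E := matNorm1 ε
  set e : Fin i → Fin M := Fin.castLE i.isLt.le
  have he : Function.Injective e := Fin.castLE_injective _
  set b : Fin i → ℂ := fun k => ⟪Ψ (e k), Ψ i⟫_ℂ
  set c := (gram Ψ i)⁻¹ *ᵥ b
  have hc : Matrix.gram ℂ (Ψ ∘ e) *ᵥ c = b :=
    Matrix.gram_mulVec_inv_mulVec (hΨ.comp e he) b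
  have hb_sum : ∑ k, ‖b k‖ ≤ E := by
    simp only [b, e, inner_castLE_eq i hε]
    exact (sum_comp_le_sum_of_injective he (g := fun x => ‖ε x i‖) fun _ => norm_nonneg _).trans
      (sum_norm_le_matNorm1 ε i)
  have hc_le : ∀ k, ‖c k‖ ≤ E / (1 - E) :=
    Matrix.norm_le_of_one_add_mulVec_eq
      ((isHermitian_of_gram_eq_one_add hε).sum_norm_submatrix_le_matNorm1 he) hE
      (fun k => (single_le_sum (fun _ _ => norm_nonneg _) (mem_univ k)).trans hb_sum)
      (gram_eq_one_add_submatrix i hε ▸ hc)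
  have hv : ‖∑ k, c k • (Ψ ∘ e) k‖ ^ 2 ≤ E / (1 - E) * E :=
    calc ‖∑ k, c k • (Ψ ∘ e) k‖ ^ 2 ≤ ∑ k, ‖c k‖ * ‖b k‖ :=
          norm_sum_smul_sq_le_of_gram_mulVec_eq hc
      _ ≤ ∑ k, E / (1 - E) * ‖b k‖ := sum_le_sum fun k _ => by gcongr; exact hc_le k
      _ ≤ E / (1 - E) * E := by
          rw [← mul_sum]
          exact mul_le_mul_of_nonneg_left hb_sum (div_nonneg (matNorm1_nonneg ε) (by linarith))
  have hre := abs_le.mp ((Complex.abs_re_le_norm (ε i i)).trans (hdiag i))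
  rw [tildePsi_eq_sub_sum_smul, norm_sub_sum_smul_sq_of_gram_mulVec_eq hc,
    norm_sq_eq_one_add_re i hε]
  constructor <;> nlinarith [sq_nonneg ‖∑ k, c k • (Ψ ∘ e) k‖]

end GramSchmidtStep

theorem stmt6_general {Z : Type*} [NormedAddCommGroup Z] [InnerProductSpace ℂ Z]
    {M : ℕ} (Ψ : Fin M → Z) (hΨ : LinearIndependent ℂ Ψ)
    (ε : Matrix (Fin M) (Fin M) ℂ)
    (hε : ∀ i j, (⟪Ψ i, Ψ j⟫_ℂ) = (if i = j then 1 else 0) + ε i j)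
    (εmax : ℝ) (hεmax : εmax = ⨆ i, ‖ε i i‖)
    (hsmall : 2 * matNorm1 ε + εmax < 1) :
    0 < (1 - 2 * matNorm1 ε - εmax) * (1 - matNorm1 ε)⁻¹ ∧
    ∀ i : Fin M,
      (1 - 2 * matNorm1 ε - εmax) * (1 - matNorm1 ε)⁻¹ ≤ ‖tildePsi Ψ i‖ ∧
      |1 - ‖tildePsi Ψ i‖⁻¹| ≤ (matNorm1 ε + εmax) * (1 - 2 * matNorm1 ε - εmax)⁻¹ := by
  have hgram : Matrix.gram ℂ Ψ = 1 + ε := by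
    ext j k
    rw [Matrix.gram_apply, hε, Matrix.add_apply, Matrix.one_apply]
  have hE := matNorm1_nonneg ε
  have hdiag (k : Fin M) : ‖ε k k‖ ≤ εmax :=
    hεmax ▸ le_ciSup (f := fun i => ‖ε i i‖) (Set.finite_range _).bddAbove k
  have hm : 0 ≤ εmax := hεmax ▸ Real.iSup_nonneg fun _ => norm_nonneg _
  refine ⟨mul_pos (by linarith) (inv_pos.2 (by linarith)), fun i => ?_⟩
  obtain ⟨hlow, hhigh⟩ := norm_tildePsi_sq_mem i hgram hΨ hdiag (by linarith)
  have hL := mul_inv_le_of_le_sq hE hm hsmall (norm_nonneg _) hlow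
  exact ⟨hL, abs_one_sub_inv_le_of_mul_inv_le hE hm hsmall hL hhigh⟩

theorem stmt6 {Z : Type*} [NormedAddCommGroup Z] [InnerProductSpace ℂ Z] [CompleteSpace Z]
    {M : ℕ} (hM : 0 < M) (Ψ : Fin M → Z) (hΨ : LinearIndependent ℂ Ψ)
    (ε : Matrix (Fin M) (Fin M) ℂ)
    (hε : ∀ i j, (⟪Ψ i, Ψ j⟫_ℂ) = (if i = j then 1 else 0) + ε i j)
    (εmax : ℝ) (hεmax : εmax = ⨆ i, ‖ε i i‖)
    (hsmall : 2 * matNorm1 ε + εmax < 1) :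
    0 < (1 - 2 * matNorm1 ε - εmax) * (1 - matNorm1 ε)⁻¹ ∧
    ∀ i : Fin M,
      (1 - 2 * matNorm1 ε - εmax) * (1 - matNorm1 ε)⁻¹ ≤ ‖tildePsi Ψ i‖ ∧
      |1 - ‖tildePsi Ψ i‖⁻¹| ≤ (matNorm1 ε + εmax) * (1 - 2 * matNorm1 ε - εmax)⁻¹ :=
  stmt6_general Ψ hΨ ε hε εmax hεmax hsmall
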